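/- arXiv:1911.11584 — 5 statements merged into one kernel-verified Lean document; each statement's English description precedes it below -/
import Mathlib

section
/- If ops is an edit script with ops(G1) = G2, then there exists a canonical edit script ops' with ops'(G1) = G2 and |ops'| ≤ |ops|. -/
/-!
Property graphs, homomorphisms/isomorphisms/subgraphs, edit operations,
edit scripts, canonical scripts, graph edit distance, partial isomorphisms
and their cost, and the edit-script rewriting system of the paper
"Flexible graph matching and graph edit distance using answer set programming".
-/

universe u v w z

variable {ι : Type u} {L : Type v} {K : Type w} {D : Type z}

/-- A raw property-graph structure: finite sets of node and edge identifiers,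
partial source/target/label functions (modelled via `Option`), and a partial
key-value property assignment. -/
structure PreGraph (ι : Type u) (L : Type v) (K : Type w) (D : Type z) where
  V : Finset ι
  E : Finset ι
  src : ι → Option ι
  tgt : ι → Option ι
  lab : ι → Option L
  prop : ι → K → Option D

section Graphs

variable [DecidableEq ι]

/-- The invariants making a raw structure an actual property graph:
nodes and edges are disjoint, sources and targets are defined exactly on
edges and map into the node set, labels are defined exactly on nodes and
edges, and properties are defined only on nodes and edges. -/
structure IsPGraph (G : PreGraph ι L K D) : Prop where
  disj : Disjoint G.V G.E
  src_dom : ∀ e, (G.src e).isSome ↔ e ∈ G.E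
  tgt_dom : ∀ e, (G.tgt e).isSome ↔ e ∈ G.E
  src_mem : ∀ e v, G.src e = some v → v ∈ G.V
  tgt_mem : ∀ e v, G.tgt e = some v → v ∈ G.V
  lab_dom : ∀ x, (G.lab x).isSome ↔ x ∈ G.V ∪ G.E
  prop_dom : ∀ x k, (G.prop x k).isSome → x ∈ G.V ∪ G.E

/-- A homomorphism of property graphs (represented by a total function on
identifiers): maps nodes to nodes and edges to edges preserving labels,
sources, targets, and all defined properties. -/
structure IsHom (G1 G2 : PreGraph ι L K D) (h : ι → ι) : Prop where
  map_V : ∀ v ∈ G1.V, h v ∈ G2.V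
  map_E : ∀ e ∈ G1.E, h e ∈ G2.E
  lab_eq : ∀ x ∈ G1.V ∪ G1.E, G2.lab (h x) = G1.lab x
  src_eq : ∀ e ∈ G1.E, ∀ v, G1.src e = some v → G2.src (h e) = some (h v)
  tgt_eq : ∀ e ∈ G1.E, ∀ v, G1.tgt e = some v → G2.tgt (h e) = some (h v)
  prop_eq : ∀ x ∈ G1.V ∪ G1.E, ∀ k d, G1.prop x k = some d → G2.prop (h x) k = some d

/-- An isomorphism of property graphs: an invertible homomorphism whose
inverse is also a homomorphism. -/
def IsIso (G1 G2 : PreGraph ι L K D) (h : ι → ι) : Prop :=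
  IsHom G1 G2 h ∧ ∃ g : ι → ι, IsHom G2 G1 g ∧
    (∀ x ∈ G1.V ∪ G1.E, g (h x) = x) ∧ (∀ y ∈ G2.V ∪ G2.E, h (g y) = y)

/-- `G'` is a subgraph of `G`: `G'` is itself a property graph, its nodes and
edges are among those of `G`, and sources, targets, labels and defined
properties agree with those of `G`. -/
def IsSubgraph (G' G : PreGraph ι L K D) : Prop :=
  IsPGraph G' ∧ G'.V ⊆ G.V ∧ G'.E ⊆ G.E ∧
  (∀ e ∈ G'.E, G'.src e = G.src e ∧ G'.tgt e = G.tgt e) ∧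
  (∀ x ∈ G'.V ∪ G'.E, G'.lab x = G.lab x) ∧
  (∀ x k d, G'.prop x k = some d → G.prop x k = some d)

end Graphs

/-- The seven edit operations on property graphs. -/
inductive EditOp (ι : Type u) (L : Type v) (K : Type w) (D : Type z) where
  | insV (v : ι) (l : L)
  | insE (e v w : ι) (l : L)
  | insP (x : ι) (k : K) (d : D)
  | delV (v : ι)
  | delE (e : ι)
  | delP (x : ι) (k : K)
  | updP (x : ι) (k : K) (d : D)

section Edits

variable [DecidableEq ι] [DecidableEq K]

/-- The precondition of an edit operation on a graph. -/
def Applicable (op : EditOp ι L K D) (G : PreGraph ι L K D) : Prop :=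
  match op with
  | .insV v _ => v ∉ G.V ∪ G.E
  | .insE e v w _ => v ∈ G.V ∧ w ∈ G.V ∧ e ∉ G.V ∪ G.E
  | .insP x k _ => x ∈ G.V ∪ G.E ∧ G.prop x k = none
  | .delV v => v ∈ G.V ∧ (∀ e ∈ G.E, G.src e ≠ some v ∧ G.tgt e ≠ some v) ∧
      (∀ k, G.prop v k = none)
  | .delE e => e ∈ G.E ∧ (∀ k, G.prop e k = none)
  | .delP x k => (G.prop x k).isSome
  | .updP x k _ => (G.prop x k).isSome

/-- The effect of an edit operation on a graph. -/
def applyOp (op : EditOp ι L K D) (G : PreGraph ι L K D) : PreGraph ι L K D :=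
  match op with
  | .insV v l =>
      { G with
        V := (insert v G.V)
        lab := fun x => if x = v then some l else G.lab x }
  | .insE e v w l =>
      { G with
        E := (insert e G.E)
        src := fun x => if x = e then some v else G.src x
        tgt := fun x => if x = e then some w else G.tgt x
        lab := fun x => if x = e then some l else G.lab x }
  | .insP x k d =>
      { G with prop := fun y k' => if y = x ∧ k' = k then some d else G.prop y k' }
  | .delV v =>
      { G with
        V := (G.V.erase v)
        lab := fun x => if x = v then none else G.lab x }
  | .delE e =>
      { G with
        E := (G.E.erase e)
        src := fun x => if x = e then none else G.src x
        tgt := fun x => if x = e then none else G.tgt x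
        lab := fun x => if x = e then none else G.lab x }
  | .delP x k =>
      { G with prop := fun y k' => if y = x ∧ k' = k then none else G.prop y k' }
  | .updP x k d =>
      { G with prop := fun y k' => if y = x ∧ k' = k then some d else G.prop y k' }

/-- An edit script is valid on `G` if each operation is applicable in the
graph produced by the preceding ones. -/
inductive ValidScript : PreGraph ι L K D → List (EditOp ι L K D) → Prop where
  | nil (G : PreGraph ι L K D) : ValidScript G []
  | cons {G : PreGraph ι L K D} {op : EditOp ι L K D} {ops : List (EditOp ι L K D)} :
      Applicable op G → ValidScript (applyOp op G) ops → ValidScript G (op :: ops)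

/-- The result `ops(G)` of applying an edit script in order. -/
def applyScript (ops : List (EditOp ι L K D)) (G : PreGraph ι L K D) : PreGraph ι L K D :=
  ops.foldl (fun g op => applyOp op g) G

/-- A canonical edit script: property deletions, then edge deletions, then
node deletions, then property updates, then node insertions, then edge
insertions, then property insertions. -/
def Canonical (ops : List (EditOp ι L K D)) : Prop :=
  ∃ dp de dv up iv ie ip : List (EditOp ι L K D),
    ops = dp ++ de ++ dv ++ up ++ iv ++ ie ++ ip ∧
    (∀ op ∈ dp, ∃ x k, op = EditOp.delP x k) ∧
    (∀ op ∈ de, ∃ e, op = EditOp.delE e) ∧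
    (∀ op ∈ dv, ∃ v, op = EditOp.delV v) ∧
    (∀ op ∈ up, ∃ x k d, op = EditOp.updP x k d) ∧
    (∀ op ∈ iv, ∃ v l, op = EditOp.insV v l) ∧
    (∀ op ∈ ie, ∃ e v w l, op = EditOp.insE e v w l) ∧
    (∀ op ∈ ip, ∃ x k d, op = EditOp.insP x k d)

/-- The set of lengths of valid edit scripts transforming `G1` into a graph
isomorphic to `G2`. -/
def GEDSet (G1 G2 : PreGraph ι L K D) : Set ℕ :=
  {n | ∃ ops : List (EditOp ι L K D), ValidScript G1 ops ∧
        (∃ f : ι → ι, IsIso (applyScript ops G1) G2 f) ∧ ops.length = n}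

/-- The graph edit distance: the minimum length of a valid edit script
transforming `G1` into a graph isomorphic to `G2`. -/
noncomputable def GED (G1 G2 : PreGraph ι L K D) : ℕ :=
  sInf (GEDSet G1 G2)

/-- The number of defined properties of a graph. -/
def propCount [Fintype K] (G : PreGraph ι L K D) : ℕ :=
  ∑ x ∈ G.V ∪ G.E, (Finset.univ.filter fun k : K => (G.prop x k).isSome).card

end Edits

/-- A possibly-marked edit operation: the boolean records whether the
operation is marked (`op*`). -/
abbrev MOp (ι : Type u) (L : Type v) (K : Type w) (D : Type z) :=
  EditOp ι L K D × Bool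

/-- The edit-script rewrite rules of Figure 5 of the paper, acting on the
marked operation and the operation immediately following it. -/
inductive RewStep : List (MOp ι L K D) → List (MOp ι L K D) → Prop where
  | delE_delP (e x : ι) (k : K) :
      RewStep [(.delE e, true), (.delP x k, false)] [(.delP x k, false), (.delE e, true)]
  | delV_delP (v x : ι) (k : K) :
      RewStep [(.delV v, true), (.delP x k, false)] [(.delP x k, false), (.delV v, true)]
  | delV_delE (v e : ι) :
      RewStep [(.delV v, true), (.delE e, false)] [(.delE e, false), (.delV v, true)]
  | updP_delP_same (x : ι) (k : K) (d : D) :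
      RewStep [(.updP x k d, true), (.delP x k, false)] [(.delP x k, false)]
  | updP_delP_ne (x y : ι) (k k' : K) (d : D) (h : ¬(x = y ∧ k = k')) :
      RewStep [(.updP x k d, true), (.delP y k', false)]
        [(.delP y k', false), (.updP x k d, true)]
  | updP_delE (x : ι) (k : K) (d : D) (e : ι) :
      RewStep [(.updP x k d, true), (.delE e, false)] [(.delE e, false), (.updP x k d, true)]
  | updP_delV (x : ι) (k : K) (d : D) (v : ι) :
      RewStep [(.updP x k d, true), (.delV v, false)] [(.delV v, false), (.updP x k d, true)]
  | insV_delP (v : ι) (l : L) (x : ι) (k : K) :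
      RewStep [(.insV v l, true), (.delP x k, false)] [(.delP x k, false), (.insV v l, true)]
  | insV_delE (v : ι) (l : L) (e : ι) :
      RewStep [(.insV v l, true), (.delE e, false)] [(.delE e, false), (.insV v l, true)]
  | insV_delV_same (v : ι) (l : L) :
      RewStep [(.insV v l, true), (.delV v, false)] []
  | insV_delV_ne (v : ι) (l : L) (v' : ι) (h : v ≠ v') :
      RewStep [(.insV v l, true), (.delV v', false)] [(.delV v', false), (.insV v l, true)]
  | insV_updP (v : ι) (l : L) (x : ι) (k : K) (d : D) :
      RewStep [(.insV v l, true), (.updP x k d, false)]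
        [(.updP x k d, false), (.insV v l, true)]
  | insE_delP (e v w : ι) (l : L) (x : ι) (k : K) :
      RewStep [(.insE e v w l, true), (.delP x k, false)]
        [(.delP x k, false), (.insE e v w l, true)]
  | insE_delE_same (e v w : ι) (l : L) :
      RewStep [(.insE e v w l, true), (.delE e, false)] []
  | insE_delE_ne (e v w : ι) (l : L) (e' : ι) (h : e ≠ e') :
      RewStep [(.insE e v w l, true), (.delE e', false)]
        [(.delE e', false), (.insE e v w l, true)]
  | insE_delV (e v w : ι) (l : L) (v' : ι) :
      RewStep [(.insE e v w l, true), (.delV v', false)]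
        [(.delV v', false), (.insE e v w l, true)]
  | insE_updP (e v w : ι) (l : L) (x : ι) (k : K) (d : D) :
      RewStep [(.insE e v w l, true), (.updP x k d, false)]
        [(.updP x k d, false), (.insE e v w l, true)]
  | insE_insV (e v w : ι) (l : L) (v' : ι) (l' : L) :
      RewStep [(.insE e v w l, true), (.insV v' l', false)]
        [(.insV v' l', false), (.insE e v w l, true)]
  | insP_delP_same (x : ι) (k : K) (d : D) :
      RewStep [(.insP x k d, true), (.delP x k, false)] []
  | insP_delP_ne (x y : ι) (k k' : K) (d : D) (h : ¬(x = y ∧ k = k')) :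
      RewStep [(.insP x k d, true), (.delP y k', false)]
        [(.delP y k', false), (.insP x k d, true)]
  | insP_delE (x : ι) (k : K) (d : D) (e : ι) :
      RewStep [(.insP x k d, true), (.delE e, false)] [(.delE e, false), (.insP x k d, true)]
  | insP_delV (x : ι) (k : K) (d : D) (v : ι) :
      RewStep [(.insP x k d, true), (.delV v, false)] [(.delV v, false), (.insP x k d, true)]
  | insP_updP_same (x : ι) (k : K) (d d' : D) :
      RewStep [(.insP x k d, true), (.updP x k d', false)] [(.insP x k d', true)]
  | insP_updP_ne (x y : ι) (k k' : K) (d d' : D) (h : ¬(x = y ∧ k = k')) :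
      RewStep [(.insP x k d, true), (.updP y k' d', false)]
        [(.updP y k' d', false), (.insP x k d, true)]
  | insP_insV (x : ι) (k : K) (d : D) (v : ι) (l : L) :
      RewStep [(.insP x k d, true), (.insV v l, false)] [(.insV v l, false), (.insP x k d, true)]
  | insP_insE (x : ι) (k : K) (d : D) (e v w : ι) (l : L) :
      RewStep [(.insP x k d, true), (.insE e v w l, false)]
        [(.insE e v w l, false), (.insP x k d, true)]
  | unmark (op : EditOp ι L K D) :
      RewStep [(op, true)] [(op, false)]

/-- One rewrite step on a marked edit script: apply one of the rules at the
position of the marked operation (everything before it is unmarked). -/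
def Rew (m m' : List (MOp ι L K D)) : Prop :=
  ∃ pre a b post : List (MOp ι L K D),
    (∀ p ∈ pre, p.2 = false) ∧ RewStep a b ∧ m = pre ++ a ++ post ∧ m' = pre ++ b ++ post

/-- The `*`-length of a marked script: the length of the suffix beginning at
the (first) marked operation, or `0` if there is none. -/
def starLen : List (MOp ι L K D) → ℕ
  | [] => 0
  | (_, b) :: rest => if b then rest.length + 1 else starLen rest

section PartialIso

variable [DecidableEq ι]

/-- A partial isomorphism between two property graphs, represented as a
partial map on identifiers: injective, matching nodes to nodes and edges to
edges with equal labels, and matching the endpoints of matched edges. -/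
def IsPartialIso (G1 G2 : PreGraph ι L K D) (h : ι → Option ι) : Prop :=
  (∀ x y, h x = some y → (x ∈ G1.V ∧ y ∈ G2.V) ∨ (x ∈ G1.E ∧ y ∈ G2.E)) ∧
  (∀ x x' y, h x = some y → h x' = some y → x = x') ∧
  (∀ x y, h x = some y → G2.lab y = G1.lab x) ∧
  (∀ e e' v, h e = some e' → G1.src e = some v → h v = G2.src e') ∧
  (∀ e e' v, h e = some e' → G1.tgt e = some v → h v = G2.tgt e')

/-- The nodes and edges of `G1` left unmatched by `h`. -/
def unmatchedL (G1 : PreGraph ι L K D) (h : ι → Option ι) : Finset ι :=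
  (G1.V ∪ G1.E).filter fun x => h x = none

/-- The nodes and edges of `G2` left unmatched by `h`. -/
def unmatchedR (G1 G2 : PreGraph ι L K D) (h : ι → Option ι) : Finset ι :=
  (G2.V ∪ G2.E).filter fun y => ∀ x ∈ G1.V ∪ G1.E, h x ≠ some y

/-- The number of defined properties on a given object of a graph. -/
def propsOn [Fintype K] (G : PreGraph ι L K D) (x : ι) : ℕ :=
  (Finset.univ.filter fun k : K => (G.prop x k).isSome).card

/-- The number of keys at which the properties of a matched pair disagree
(defined with different values, or defined on only one side). -/
def mismatchCount [Fintype K] [DecidableEq D] (G1 G2 : PreGraph ι L K D) (x y : ι) : ℕ :=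
  (Finset.univ.filter fun k : K => G1.prop x k ≠ G2.prop y k).card

/-- The cost of a partial isomorphism: unmatched nodes and edges on both
sides, mismatched properties of matched pairs, and all properties on
unmatched objects of both sides. -/
def pisoCost [Fintype K] [DecidableEq D] (G1 G2 : PreGraph ι L K D) (h : ι → Option ι) : ℕ :=
  (unmatchedL G1 h).card + (unmatchedR G1 G2 h).card +
  (∑ x ∈ G1.V ∪ G1.E, (h x).elim 0 fun y => mismatchCount G1 G2 x y) +
  (∑ x ∈ unmatchedL G1 h, propsOn G1 x) +
  (∑ y ∈ unmatchedR G1 G2 h, propsOn G2 y)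

end PartialIso


/-!
Rank the seven kinds of operations in the order of a canonical script and sort an edit script
by insertion. When an operation `b` has to move in front of an operation `a` of higher rank,
either `b` deletes or updates exactly the node, edge or property that `a` has just inserted or
updated, and then the two cancel (insertion followed by deletion), `a` disappears (update
followed by deletion) or the two merge into one insertion (insertion followed by update); or else
the two operations commute. No such step changes the resulting graph or lengthens the script.
-/

theorem List.Pairwise.filter_le_eq_filter_eq_append {α : Type*} {f : α → ℕ} {l : List α}
    (hl : l.Pairwise (f · ≤ f ·)) (n : ℕ) :
    l.filter (n ≤ f ·) = l.filter (f · = n) ++ l.filter (n + 1 ≤ f ·) := by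
  induction l with
  | nil => rfl
  | cons a l ih =>
    obtain ⟨ha, hl⟩ := List.pairwise_cons.mp hl
    simp only [List.filter_cons, decide_eq_true_eq]
    rcases lt_trichotomy (f a) n with h | rfl | h
    · simp [h.not_ge, h.ne, ih hl, show ¬n + 1 ≤ f a by omega]
    · simp [ih hl]
    · have hnil : l.filter (f · = n) = [] :=
        List.filter_eq_nil_iff.mpr fun b hb => by have := ha b hb; simp; omega
      simp [h.le, h.ne', show n + 1 ≤ f a by omega, ih hl, hnil]

def EditOp.rank : EditOp ι L K D → ℕ
  | .delP _ _ => 0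
  | .delE _ => 1
  | .delV _ => 2
  | .updP _ _ _ => 3
  | .insV _ _ => 4
  | .insE _ _ _ _ => 5
  | .insP _ _ _ => 6

theorem canonical_of_pairwise_rank {ops : List (EditOp ι L K D)}
    (h : ops.Pairwise (·.rank ≤ ·.rank)) : Canonical ops := by
  have hsplit := h.filter_le_eq_filter_eq_append
  have hlast : ops.filter (7 ≤ ·.rank) = [] :=
    List.filter_eq_nil_iff.mpr fun a _ => by cases a <;> simp [EditOp.rank]
  refine ⟨ops.filter (·.rank = 0), ops.filter (·.rank = 1), ops.filter (·.rank = 2),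
    ops.filter (·.rank = 3), ops.filter (·.rank = 4), ops.filter (·.rank = 5),
    ops.filter (·.rank = 6), ?_, ?_⟩
  · calc ops = ops.filter (0 ≤ ·.rank) := by simp
      _ = _ := by
        rw [hsplit 0, hsplit 1, hsplit 2, hsplit 3, hsplit 4, hsplit 5, hsplit 6, hlast]
        simp only [List.append_nil, List.append_assoc]
  refine ⟨?_, ?_, ?_, ?_, ?_, ?_, ?_⟩ <;> intro op hop <;>
    cases op <;> simp [EditOp.rank] at hop ⊢

attribute [ext] PreGraph

/-- The pairs rewritten by the rules of Figure 5 of the paper that are not plain swaps. -/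
def EditOp.Overwrites : EditOp ι L K D → EditOp ι L K D → Prop
  | .delP y k', .updP x k _ => y = x ∧ k' = k
  | .delV v', .insV v _ => v' = v
  | .delE e', .insE e _ _ _ => e' = e
  | .delP y k', .insP x k _ => y = x ∧ k' = k
  | .updP y k' _, .insP x k _ => y = x ∧ k' = k
  | _, _ => False

section Exchange

variable [DecidableEq ι] [DecidableEq K]

theorem applyScript_cons (op : EditOp ι L K D) (ops : List (EditOp ι L K D))
    (G : PreGraph ι L K D) : applyScript (op :: ops) G = applyScript ops (applyOp op G) := rfl

theorem IsPGraph.applyOp {G : PreGraph ι L K D} (hG : IsPGraph G) {op : EditOp ι L K D}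
    (hop : Applicable op G) : IsPGraph (applyOp op G) := by
  obtain ⟨hdisj, hsrc, htgt, hsrcV, htgtV, hlab, hprop⟩ := hG
  cases op <;> simp only [Applicable] at hop <;> constructor <;> simp only [_root_.applyOp] <;>
    intros
  all_goals grind [Finset.disjoint_left]

theorem commute_of_not_overwrites {G : PreGraph ι L K D} {a b : EditOp ι L K D}
    (ha : Applicable a G) (hb : Applicable b (applyOp a G)) (hrk : b.rank < a.rank)
    (hab : ¬b.Overwrites a) :
    Applicable b G ∧ Applicable a (applyOp b G) ∧
      applyOp b (applyOp a G) = applyOp a (applyOp b G) := by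
  cases a <;> cases b <;> simp only [EditOp.rank] at hrk <;> try omega
  all_goals
    simp only [EditOp.Overwrites] at hab
    simp only [Applicable, applyOp, Finset.forall_mem_insert, ↓reduceIte] at ha hb
    exact ⟨by simp only [Applicable]; grind, by simp only [Applicable, applyOp]; grind,
      by ext <;> simp only [applyOp] <;> grind⟩

inductive Exchange (G : PreGraph ι L K D) (a b : EditOp ι L K D) : Prop
  | cancel : applyOp b (applyOp a G) = G → Exchange G a b
  | absorb : Applicable b G → applyOp b (applyOp a G) = applyOp b G → Exchange G a b
  | merge (a' : EditOp ι L K D) : a'.rank = a.rank → Applicable a' G →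
      applyOp b (applyOp a G) = applyOp a' G → Exchange G a b
  | commute : Applicable b G → Applicable a (applyOp b G) →
      applyOp b (applyOp a G) = applyOp a (applyOp b G) → Exchange G a b

theorem exchange_of_overwrites {G : PreGraph ι L K D} (hG : IsPGraph G) {a b : EditOp ι L K D}
    (ha : Applicable a G) (hab : b.Overwrites a) : Exchange G a b := by
  obtain ⟨-, hsrc, htgt, -, -, hlab, -⟩ := hG
  cases a <;> cases b <;> simp only [EditOp.Overwrites] at hab
  all_goals simp only [Applicable] at ha
  case updP.delP =>
    obtain ⟨rfl, rfl⟩ := hab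
    exact .absorb ha (by ext <;> simp only [applyOp] <;> grind)
  case insV.delV => exact .cancel (by ext <;> simp only [applyOp] <;> grind)
  case insE.delE => exact .cancel (by ext <;> simp only [applyOp] <;> grind)
  case insP.delP => exact .cancel (by ext <;> simp only [applyOp] <;> grind)
  case insP.updP _ _ _ x k d' =>
    obtain ⟨rfl, rfl⟩ := hab
    exact .merge (.insP x k d') rfl ha (by ext <;> simp only [applyOp] <;> grind)

theorem exchange_of_rank_lt {G : PreGraph ι L K D} (hG : IsPGraph G) {a b : EditOp ι L K D}
    (ha : Applicable a G) (hb : Applicable b (applyOp a G)) (hrk : b.rank < a.rank) :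
    Exchange G a b := by
  by_cases hab : b.Overwrites a
  · exact exchange_of_overwrites hG ha hab
  · obtain ⟨hbG, haG, heq⟩ := commute_of_not_overwrites ha hb hrk hab
    exact .commute hbG haG heq

theorem exists_sorted_insert (op : EditOp ι L K D) (c : List (EditOp ι L K D))
    {G : PreGraph ι L K D} (hG : IsPGraph G) (hop : Applicable op G)
    (hc : ValidScript (applyOp op G) c) (hsort : c.Pairwise (·.rank ≤ ·.rank)) :
    ∃ c', c'.Pairwise (·.rank ≤ ·.rank) ∧ ValidScript G c' ∧
      applyScript c' G = applyScript c (applyOp op G) ∧ c'.length ≤ c.length + 1 ∧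
      ∀ r ≤ op.rank, (∀ y ∈ c, r ≤ y.rank) → ∀ x ∈ c', r ≤ x.rank := by
  induction c generalizing G op with
  | nil => exact ⟨[op], by simp, .cons hop (.nil _), rfl, le_rfl, by simp⟩
  | cons b rest ih =>
    obtain ⟨hb, hrest⟩ := List.pairwise_cons.mp hsort
    obtain _ | ⟨hbapp, hvrest⟩ := hc
    by_cases hrk : op.rank ≤ b.rank
    · refine ⟨op :: b :: rest, ?_, .cons hop (.cons hbapp hvrest), rfl, by simp, ?_⟩
      · exact List.pairwise_cons.mpr
          ⟨List.forall_mem_cons.mpr ⟨hrk, fun x hx => hrk.trans (hb x hx)⟩, hsort⟩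
      · exact fun r hr hrc => List.forall_mem_cons.mpr ⟨hr, hrc⟩
    obtain hcancel | ⟨hbG, heq⟩ | ⟨op', hrk', hop', heq⟩ | ⟨hbG, hopb, heq⟩ :=
      exchange_of_rank_lt hG hop hbapp (not_le.mp hrk)
    · refine ⟨rest, hrest, hcancel ▸ hvrest, by rw [applyScript_cons, hcancel],
        by simp only [List.length_cons]; omega, fun r _ hrc => (List.forall_mem_cons.mp hrc).2⟩
    · refine ⟨b :: rest, hsort, .cons hbG (heq ▸ hvrest), ?_, by simp, fun r _ hrc => hrc⟩
      rw [applyScript_cons, applyScript_cons, heq]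
    · obtain ⟨c', hsort', hvalid', happ', hlen', hbound⟩ := ih op' hG hop' (heq ▸ hvrest) hrest
      refine ⟨c', hsort', hvalid', by rw [happ', applyScript_cons, heq], by simp; omega,
        fun r hr hrc => hbound r (hrk' ▸ hr) (List.forall_mem_cons.mp hrc).2⟩
    · obtain ⟨c', hsort', hvalid', happ', hlen', hbound⟩ :=
        ih op (hG.applyOp hbG) hopb (heq ▸ hvrest) hrest
      refine ⟨b :: c', List.pairwise_cons.mpr ⟨hbound _ (not_le.mp hrk).le hb, hsort'⟩,
        .cons hbG hvalid', by rw [applyScript_cons, happ', applyScript_cons, heq],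
        by simpa using hlen', fun r hr hrc => ?_⟩
      obtain ⟨hrb, hrrest⟩ := List.forall_mem_cons.mp hrc
      exact List.forall_mem_cons.mpr ⟨hrb, hbound r hr hrrest⟩

theorem exists_sorted_script (ops : List (EditOp ι L K D)) {G : PreGraph ι L K D}
    (hG : IsPGraph G) (hops : ValidScript G ops) :
    ∃ c, c.Pairwise (·.rank ≤ ·.rank) ∧ ValidScript G c ∧
      applyScript c G = applyScript ops G ∧ c.length ≤ ops.length := by
  induction ops generalizing G with
  | nil => exact ⟨[], .nil, .nil _, rfl, le_rfl⟩
  | cons op ops ih =>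
    obtain _ | ⟨hop, hops⟩ := hops
    obtain ⟨c, hsort, hvalid, happ, hlen⟩ := ih (hG.applyOp hop) hops
    obtain ⟨c', hsort', hvalid', happ', hlen', -⟩ := exists_sorted_insert op c hG hop hvalid hsort
    exact ⟨c', hsort', hvalid', by rw [happ', happ, applyScript_cons], by simp; omega⟩

end Exchange

/-- every valid edit script mapping `G1` to `G2` can be replaced by
a canonical edit script mapping `G1` to `G2` of no greater length. -/
theorem exists_canonical_script
    [DecidableEq ι] [DecidableEq K]
    (G1 G2 : PreGraph ι L K D) (hG1 : IsPGraph G1)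
    (ops : List (EditOp ι L K D))
    (hvalid : ValidScript G1 ops) (happ : applyScript ops G1 = G2) :
    ∃ ops' : List (EditOp ι L K D), Canonical ops' ∧ ValidScript G1 ops' ∧
      applyScript ops' G1 = G2 ∧ ops'.length ≤ ops.length := by
  obtain ⟨c, hsort, hvalid', happ', hlen⟩ := exists_sorted_script ops hG1 hvalid
  exact ⟨c, canonical_of_pairwise_rank hsort, hvalid', happ'.trans happ, hlen⟩
end

section
/- If ops is a canonical edit script with ops(G2) = G3 and op is a single edit operation with op(G1) = G2, then there exists a canonical edit script ops' with ops'(G1) = G3 and |ops'| ≤ 1 + |ops|; moreover ops' is obtained by exhaustively applying the rewrite rules of the paper to the marked script op*; ops, and this rewriting terminates because each rule strictly decreases the length of the suffix beginning at the marked operation. -/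
/-!
Property graphs, homomorphisms/isomorphisms/subgraphs, edit operations,
edit scripts, canonical scripts, graph edit distance, partial isomorphisms
and their cost, and the edit-script rewriting system of the paper
"Flexible graph matching and graph edit distance using answer set programming".
-/

universe u v w z

variable {ι : Type u} {L : Type v} {K : Type w} {D : Type z}

/-!
Rank the seven kinds of operations by their block in a canonical script (`EditOp.rank`): a script
is canonical exactly when its ranks are non-decreasing. The rules of Figure 5 move the marked
operation to the right past every operation of smaller rank, until it cancels against the deletion
of what it inserted, is absorbed by a deletion of the property it updates, absorbs an update of the
property it inserts and travels on, or reaches an operation of rank at least its own and is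
unmarked. No rule lengthens the script, so the result is canonical and at most one longer than
`ops`. Every rule preserves validity and the resulting graph; for the cancellations this needs
labels, sources and targets to be `none` off the nodes and edges (`PreGraph.NoneOffSupport`),
which holds in a property graph and is preserved by every operation.
-/

namespace EditOp

def rank_s7 : EditOp ι L K D → ℕ
  | .delP _ _ => 0
  | .delE _ => 1
  | .delV _ => 2
  | .updP _ _ _ => 3
  | .insV _ _ => 4
  | .insE _ _ _ _ => 5
  | .insP _ _ _ => 6

def Interferes : EditOp ι L K D → EditOp ι L K D → Prop
  | .updP x k _, .delP y k' => x = y ∧ k = k'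
  | .insV v _, .delV v' => v = v'
  | .insE e _ _ _, .delE e' => e = e'
  | .insP x k _, .delP y k' => x = y ∧ k = k'
  | .insP x k _, .updP y k' _ => x = y ∧ k = k'
  | _, _ => False

end EditOp

open EditOp

theorem Canonical.cons {o : EditOp ι L K D} {ops : List (EditOp ι L K D)} (h : Canonical ops)
    (ho : ∀ b ∈ ops, o.rank_s7 ≤ b.rank_s7) : Canonical (o :: ops) := by
  obtain ⟨dp, de, dv, up, iv, ie, ip, rfl, hdp, hde, hdv, hup, hiv, hie, hip⟩ := h
  simp only [List.mem_append, or_imp, forall_and] at ho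
  cases o with
  | delP x k =>
    exact ⟨.delP x k :: dp, de, dv, up, iv, ie, ip, rfl, by simpa using hdp, hde, hdv, hup, hiv,
      hie, hip⟩
  | delE e =>
    obtain rfl : dp = [] := by simp only [List.eq_nil_iff_forall_not_mem]; grind [rank_s7]
    exact ⟨[], .delE e :: de, dv, up, iv, ie, ip, rfl, nofun, by simpa using hde, hdv, hup, hiv,
      hie, hip⟩
  | delV v =>
    obtain ⟨rfl, rfl⟩ : dp = [] ∧ de = [] := by
      simp only [List.eq_nil_iff_forall_not_mem]; grind [rank_s7]
    exact ⟨[], [], .delV v :: dv, up, iv, ie, ip, rfl, nofun, nofun, by simpa using hdv, hup,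
      hiv, hie, hip⟩
  | updP x k d =>
    obtain ⟨rfl, rfl, rfl⟩ : dp = [] ∧ de = [] ∧ dv = [] := by
      simp only [List.eq_nil_iff_forall_not_mem]; grind [rank_s7]
    exact ⟨[], [], [], .updP x k d :: up, iv, ie, ip, rfl, nofun, nofun, nofun,
      by simpa using hup, hiv, hie, hip⟩
  | insV v l =>
    obtain ⟨rfl, rfl, rfl, rfl⟩ : dp = [] ∧ de = [] ∧ dv = [] ∧ up = [] := by
      simp only [List.eq_nil_iff_forall_not_mem]; grind [rank_s7]
    exact ⟨[], [], [], [], .insV v l :: iv, ie, ip, rfl, nofun, nofun, nofun, nofun,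
      by simpa using hiv, hie, hip⟩
  | insE e v w l =>
    obtain ⟨rfl, rfl, rfl, rfl, rfl⟩ :
        dp = [] ∧ de = [] ∧ dv = [] ∧ up = [] ∧ iv = [] := by
      simp only [List.eq_nil_iff_forall_not_mem]; grind [rank_s7]
    exact ⟨[], [], [], [], [], .insE e v w l :: ie, ip, rfl, nofun, nofun, nofun, nofun,
      nofun, by simpa using hie, hip⟩
  | insP x k d =>
    obtain ⟨rfl, rfl, rfl, rfl, rfl, rfl⟩ :
        dp = [] ∧ de = [] ∧ dv = [] ∧ up = [] ∧ iv = [] ∧ ie = [] := by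
      simp only [List.eq_nil_iff_forall_not_mem]; grind [rank_s7]
    exact ⟨[], [], [], [], [], [], .insP x k d :: ip, rfl, nofun, nofun, nofun, nofun,
      nofun, nofun, by simpa using hip⟩

theorem canonical_iff_pairwise_rank {ops : List (EditOp ι L K D)} :
    Canonical ops ↔ (ops.map rank_s7).Pairwise (· ≤ ·) := by
  constructor
  · rintro ⟨dp, de, dv, up, iv, ie, ip, rfl, hdp, hde, hdv, hup, hiv, hie, hip⟩
    have r0 : ∀ o ∈ dp, o.rank_s7 = 0 := by grind [rank_s7]
    have r1 : ∀ o ∈ de, o.rank_s7 = 1 := by grind [rank_s7]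
    have r2 : ∀ o ∈ dv, o.rank_s7 = 2 := by grind [rank_s7]
    have r3 : ∀ o ∈ up, o.rank_s7 = 3 := by grind [rank_s7]
    have r4 : ∀ o ∈ iv, o.rank_s7 = 4 := by grind [rank_s7]
    have r5 : ∀ o ∈ ie, o.rank_s7 = 5 := by grind [rank_s7]
    have r6 : ∀ o ∈ ip, o.rank_s7 = 6 := by grind [rank_s7]
    rw [List.pairwise_map]
    simp +contextual [List.pairwise_append, List.pairwise_of_forall_mem_list, or_imp,
      r0, r1, r2, r3, r4, r5, r6]
  · intro h
    induction ops with
    | nil =>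
      exact ⟨[], [], [], [], [], [], [], rfl, nofun, nofun, nofun, nofun, nofun, nofun, nofun⟩
    | cons o ops ih =>
      obtain ⟨ho, hs⟩ := List.pairwise_cons.1 h
      exact (ih hs).cons fun b hb => ho _ (List.mem_map_of_mem hb)

theorem RewStep.swap_of_rank_lt {op q : EditOp ι L K D} (hlt : q.rank_s7 < op.rank_s7)
    (hni : ¬ op.Interferes q) : RewStep [(op, true), (q, false)] [(q, false), (op, true)] := by
  cases op <;> cases q <;> simp only [rank_s7] at hlt <;> (try omega) <;>
    simp only [Interferes] at hni <;> constructor <;> assumption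

theorem RewStep.of_interferes {op q : EditOp ι L K D} (h : op.Interferes q) :
    RewStep [(op, true), (q, false)] [] ∨ RewStep [(op, true), (q, false)] [(q, false)] ∨
      ∃ op', RewStep [(op, true), (q, false)] [(op', true)] ∧ op'.rank_s7 = op.rank_s7 := by
  cases op <;> cases q <;> simp only [Interferes] at h
  · subst h; exact .inl <| .insV_delV_same ..
  · subst h; exact .inl <| .insE_delE_same ..
  · obtain ⟨rfl, rfl⟩ := h; exact .inl <| .insP_delP_same ..
  · obtain ⟨rfl, rfl⟩ := h; exact .inr <| .inr ⟨_, .insP_updP_same .., rfl⟩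
  · obtain ⟨rfl, rfl⟩ := h; exact .inr <| .inl <| .updP_delP_same ..

theorem starLen_le_length (m : List (MOp ι L K D)) : starLen m ≤ m.length := by
  induction m with
  | nil => simp [starLen]
  | cons a t ih =>
    obtain ⟨o, b⟩ := a
    simp only [starLen, List.length_cons]
    split <;> omega

theorem starLen_append_of_unmarked {pre : List (MOp ι L K D)} (h : ∀ p ∈ pre, p.2 = false)
    (m : List (MOp ι L K D)) : starLen (pre ++ m) = starLen m := by
  induction pre with
  | nil => rfl
  | cons p pre ih =>
    obtain ⟨o, b⟩ := p
    obtain rfl : b = false := h _ List.mem_cons_self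
    exact ih fun p hp => h p (List.mem_cons_of_mem _ hp)

theorem Rew.starLen_lt {m m' : List (MOp ι L K D)} (h : Rew m m') : starLen m' < starLen m := by
  obtain ⟨pre, a, b, post, hpre, hstep, rfl, rfl⟩ := h
  simp only [List.append_assoc, starLen_append_of_unmarked hpre]
  have := starLen_le_length post
  cases hstep <;> simp [starLen] <;> omega

theorem RewStep.rew_append {a b : List (MOp ι L K D)} (h : RewStep a b)
    (post : List (MOp ι L K D)) : Rew (a ++ post) (b ++ post) :=
  ⟨[], a, b, post, by simp, h, rfl, rfl⟩

theorem Rew.cons_unmarked {m m' : List (MOp ι L K D)} (h : Rew m m') (q : EditOp ι L K D) :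
    Rew ((q, false) :: m) ((q, false) :: m') := by
  obtain ⟨pre, a, b, post, hpre, hstep, rfl, rfl⟩ := h
  exact ⟨(q, false) :: pre, a, b, post, by simpa using hpre, hstep, rfl, rfl⟩

theorem Rew.exists_reflTransGen_sorted (ops : List (EditOp ι L K D))
    (hs : (ops.map rank_s7).Pairwise (· ≤ ·)) (op : EditOp ι L K D) :
    ∃ ops' : List (EditOp ι L K D), (ops'.map rank_s7).Pairwise (· ≤ ·) ∧
      ops'.length ≤ ops.length + 1 ∧ ops'.map rank_s7 ⊆ (op :: ops).map rank_s7 ∧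
      Relation.ReflTransGen Rew ((op, true) :: ops.map (·, false)) (ops'.map (·, false)) := by
  induction ops generalizing op with
  | nil => exact ⟨[op], by simp, by simp, by simp, .single ((RewStep.unmark op).rew_append [])⟩
  | cons q rest ih =>
    obtain ⟨hq, hrest⟩ := List.pairwise_cons.1 hs
    by_cases hle : op.rank_s7 ≤ q.rank_s7
    · exact ⟨op :: q :: rest, List.pairwise_cons.2 ⟨fun r hr => by grind, hs⟩, by simp,
        by simp, .single ((RewStep.unmark op).rew_append _)⟩
    by_cases hi : op.Interferes q
    · rcases RewStep.of_interferes hi with h | h | ⟨op', h, hrank⟩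
      · exact ⟨rest, hrest, by simp; omega, by simp, .single (h.rew_append _)⟩
      · exact ⟨q :: rest, hs, by simp, by simp, .single (h.rew_append _)⟩
      · obtain ⟨ops', hs', hlen, hsub, hrew⟩ := ih hrest op'
        refine ⟨ops', hs', by simp; omega, fun r hr => by grind, .head (h.rew_append _) hrew⟩
    · obtain ⟨ops', hs', hlen, hsub, hrew⟩ := ih hrest op
      have hswap := (RewStep.swap_of_rank_lt (not_le.1 hle) hi).rew_append (rest.map (·, false))
      exact ⟨q :: ops', List.pairwise_cons.2 ⟨fun r hr => by grind, hs'⟩, by simp; omega,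
        fun r hr => by grind, .head hswap (hrew.lift _ fun _ _ h => h.cons_unmarked q)⟩

section Semantics

variable [DecidableEq ι]

structure PreGraph.NoneOffSupport (G : PreGraph ι L K D) : Prop where
  lab_eq_none : ∀ x ∉ G.V ∪ G.E, G.lab x = none
  src_eq_none : ∀ e ∉ G.E, G.src e = none
  tgt_eq_none : ∀ e ∉ G.E, G.tgt e = none

theorem IsPGraph.noneOffSupport {G : PreGraph ι L K D} (hG : IsPGraph G) : G.NoneOffSupport where
  lab_eq_none x hx := Option.not_isSome_iff_eq_none.1 fun h => hx ((hG.lab_dom x).1 h)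
  src_eq_none e he := Option.not_isSome_iff_eq_none.1 fun h => he ((hG.src_dom e).1 h)
  tgt_eq_none e he := Option.not_isSome_iff_eq_none.1 fun h => he ((hG.tgt_dom e).1 h)

variable [DecidableEq K]

theorem noneOffSupport_applyOp {G : PreGraph ι L K D} (hG : G.NoneOffSupport)
    (op : EditOp ι L K D) : (applyOp op G).NoneOffSupport := by
  obtain ⟨hlab, hsrc, htgt⟩ := hG
  cases op <;> constructor <;> simp only [applyOp] <;> grind

theorem noneOffSupport_applyScript {G : PreGraph ι L K D} (hG : G.NoneOffSupport)
    (ops : List (EditOp ι L K D)) : (applyScript ops G).NoneOffSupport := by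
  induction ops generalizing G with
  | nil => exact hG
  | cons op ops ih => exact ih (noneOffSupport_applyOp hG op)

theorem applyScript_append (ops₁ ops₂ : List (EditOp ι L K D)) (G : PreGraph ι L K D) :
    applyScript (ops₁ ++ ops₂) G = applyScript ops₂ (applyScript ops₁ G) :=
  List.foldl_append

theorem validScript_cons_iff {G : PreGraph ι L K D} {op : EditOp ι L K D}
    {ops : List (EditOp ι L K D)} :
    ValidScript G (op :: ops) ↔ Applicable op G ∧ ValidScript (applyOp op G) ops :=
  ⟨fun | .cons h hs => ⟨h, hs⟩, fun ⟨h, hs⟩ => .cons h hs⟩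

theorem validScript_append_iff {G : PreGraph ι L K D} {ops₁ ops₂ : List (EditOp ι L K D)} :
    ValidScript G (ops₁ ++ ops₂) ↔
      ValidScript G ops₁ ∧ ValidScript (applyScript ops₁ G) ops₂ := by
  induction ops₁ generalizing G with
  | nil => exact ⟨fun h => ⟨.nil G, h⟩, And.right⟩
  | cons op ops ih => simp only [List.cons_append, validScript_cons_iff, ih, and_assoc]; rfl

theorem RewStep.sound {a b : List (MOp ι L K D)} (h : RewStep a b) {G : PreGraph ι L K D}
    (hG : G.NoneOffSupport) (hv : ValidScript G (a.map Prod.fst)) :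
    ValidScript G (b.map Prod.fst) ∧
      applyScript (b.map Prod.fst) G = applyScript (a.map Prod.fst) G := by
  obtain ⟨V, E, src, tgt, lab, prop⟩ := G
  obtain ⟨hlab, hsrc, htgt⟩ := hG
  cases h <;> simp only [List.map, validScript_cons_iff, ValidScript.nil, applyScript, List.foldl,
    Applicable, applyOp, Finset.forall_mem_insert, and_true, true_and] at * <;>
    (try refine ⟨by grind, ?_⟩) <;> congr 1 <;> (try funext) <;> grind

theorem Rew.sound {m m' : List (MOp ι L K D)} (h : Rew m m') {G : PreGraph ι L K D}
    (hG : G.NoneOffSupport) (hv : ValidScript G (m.map Prod.fst)) :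
    ValidScript G (m'.map Prod.fst) ∧
      applyScript (m'.map Prod.fst) G = applyScript (m.map Prod.fst) G := by
  obtain ⟨pre, a, b, post, -, hab, rfl, rfl⟩ := h
  simp only [List.map_append, validScript_append_iff, applyScript_append] at hv ⊢
  obtain ⟨⟨hpre, ha⟩, hpost⟩ := hv
  obtain ⟨hb, hba⟩ := hab.sound (noneOffSupport_applyScript hG _) ha
  rw [hba]
  exact ⟨⟨⟨hpre, hb⟩, hpost⟩, rfl⟩

theorem Rew.sound_of_reflTransGen {m m' : List (MOp ι L K D)}
    (h : Relation.ReflTransGen Rew m m') {G : PreGraph ι L K D}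
    (hG : G.NoneOffSupport) (hv : ValidScript G (m.map Prod.fst)) :
    ValidScript G (m'.map Prod.fst) ∧
      applyScript (m'.map Prod.fst) G = applyScript (m.map Prod.fst) G := by
  induction h with
  | refl => exact ⟨hv, rfl⟩
  | tail _ hstep ih =>
    obtain ⟨hv', heq⟩ := hstep.sound hG ih.1
    exact ⟨hv', heq.trans ih.2⟩

end Semantics

/-- prepending a single edit operation to a canonical script and
exhaustively rewriting yields a canonical script with the same overall effect
and length at most one greater; moreover every rewrite step strictly decreases
the length of the suffix beginning at the marked operation, so rewriting
terminates. -/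
theorem prepend_and_canonicalize
    [DecidableEq ι] [DecidableEq K]
    (G1 G2 G3 : PreGraph ι L K D) (hG1 : IsPGraph G1)
    (op : EditOp ι L K D) (ops : List (EditOp ι L K D))
    (hop : Applicable op G1) (hopG : applyOp op G1 = G2)
    (hcan : Canonical ops) (hvalid : ValidScript G2 ops)
    (happ : applyScript ops G2 = G3) :
    (∃ ops' : List (EditOp ι L K D), Canonical ops' ∧ ValidScript G1 ops' ∧
      applyScript ops' G1 = G3 ∧ ops'.length ≤ 1 + ops.length ∧
      Relation.ReflTransGen Rew
        ((op, true) :: ops.map (fun o => (o, false)))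
        (ops'.map (fun o => (o, false)))) ∧
    (∀ m m' : List (MOp ι L K D), Rew m m' → starLen m' < starLen m) := by
  subst hopG happ
  refine ⟨?_, fun _ _ h => h.starLen_lt⟩
  obtain ⟨ops', hsorted, hlen, -, hrew⟩ :=
    Rew.exists_reflTransGen_sorted ops (canonical_iff_pairwise_rank.1 hcan) op
  obtain ⟨hvalid', happ'⟩ := Rew.sound_of_reflTransGen hrew hG1.noneOffSupport
    (by simpa [Function.comp_def] using validScript_cons_iff.2 ⟨hop, hvalid⟩)
  simp only [List.map_cons, List.map_map, Function.comp_def, List.map_id'] at hvalid' happ'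
  exact ⟨ops', canonical_iff_pairwise_rank.2 hsorted, hvalid', happ', by omega, hrew⟩
end

section
/- Let G be a property graph such that delE(e) is applicable to G and delP(x,k) is applicable to delE(e)(G). Then delP(x,k) is applicable to G, delE(e) is applicable to delP(x,k)(G), and delE(e)(delP(x,k)(G)) = delP(x,k)(delE(e)(G)): an edge deletion followed by a property deletion can be performed in the opposite order with the same result. -/
/-!
Property graphs, homomorphisms/isomorphisms/subgraphs, edit operations,
edit scripts, canonical scripts, graph edit distance, partial isomorphisms
and their cost, and the edit-script rewriting system of the paper
"Flexible graph matching and graph edit distance using answer set programming".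
-/

universe u v w z

variable {ι : Type u} {L : Type v} {K : Type w} {D : Type z}

/-- an edge deletion followed by a property deletion can be
performed in the opposite order, with the same result. -/
theorem delE_delP_comm
    [DecidableEq ι] [DecidableEq K]
    (G : PreGraph ι L K D) (hG : IsPGraph G) (e x : ι) (k : K)
    (h1 : Applicable (EditOp.delE e) G)
    (h2 : Applicable (EditOp.delP x k) (applyOp (EditOp.delE e) G)) :
    Applicable (EditOp.delP x k) G ∧
    Applicable (EditOp.delE e) (applyOp (EditOp.delP x k) G) ∧
    applyOp (EditOp.delE e) (applyOp (EditOp.delP x k) G) =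
      applyOp (EditOp.delP x k) (applyOp (EditOp.delE e) G) := by
  refine ⟨h2, ⟨h1.1, fun k' => ?_⟩, rfl⟩
  simp [applyOp, h1.2 k']
end

section
/- Let G be a property graph such that delV(v) is applicable to G and delE(e) is applicable to delV(v)(G). Then delE(e) is applicable to G, delV(v) is applicable to delE(e)(G), and delV(v)(delE(e)(G)) = delE(e)(delV(v)(G)): a node deletion followed by an edge deletion can be performed in the opposite order with the same result. -/
/-!
Property graphs, homomorphisms/isomorphisms/subgraphs, edit operations,
edit scripts, canonical scripts, graph edit distance, partial isomorphisms
and their cost, and the edit-script rewriting system of the paper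
"Flexible graph matching and graph edit distance using answer set programming".
-/

universe u v w z

variable {ι : Type u} {L : Type v} {K : Type w} {D : Type z}

/-- a node deletion followed by an edge deletion can be performed
in the opposite order, with the same result. -/
theorem delV_delE_comm
    [DecidableEq ι] [DecidableEq K]
    (G : PreGraph ι L K D) (hG : IsPGraph G) (v e : ι)
    (h1 : Applicable (EditOp.delV v) G)
    (h2 : Applicable (EditOp.delE e) (applyOp (EditOp.delV v) G)) :
    Applicable (EditOp.delE e) G ∧
    Applicable (EditOp.delV v) (applyOp (EditOp.delE e) G) ∧
    applyOp (EditOp.delV v) (applyOp (EditOp.delE e) G) =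
      applyOp (EditOp.delE e) (applyOp (EditOp.delV v) G) := by
  obtain ⟨hvV, hnoedge, hnoprop⟩ := h1
  simp only [Applicable, applyOp] at h2
  obtain ⟨heE, heprop⟩ := h2
  refine ⟨⟨heE, heprop⟩, ⟨?_, ?_, ?_⟩, ?_⟩
  · exact hvV
  · intro e' he'
    simp only [applyOp, Finset.mem_erase] at he' ⊢
    have h := hnoedge e' he'.2
    exact ⟨by simpa [he'.1] using h.1, by simpa [he'.1] using h.2⟩
  · intro k; exact hnoprop k
  · simp only [applyOp]
    congr 1
    funext x
    by_cases hx : x = v <;> by_cases hx' : x = e <;> simp [hx, hx']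
end

section
/- Let G be a property graph such that updP(x,k,d) is applicable to G and delE(e) is applicable to updP(x,k,d)(G). Then delE(e) is applicable to G, updP(x,k,d) is applicable to delE(e)(G), and updP(x,k,d)(delE(e)(G)) = delE(e)(updP(x,k,d)(G)): a property update followed by an edge deletion can be performed in the opposite order with the same result (note that necessarily x ≠ e, since delE requires e to have no properties while updP requires prop(x,k) to be defined). -/
/-!
Property graphs, homomorphisms/isomorphisms/subgraphs, edit operations,
edit scripts, canonical scripts, graph edit distance, partial isomorphisms
and their cost, and the edit-script rewriting system of the paper
"Flexible graph matching and graph edit distance using answer set programming".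
-/

universe u v w z

variable {ι : Type u} {L : Type v} {K : Type w} {D : Type z}

/-- a property update followed by an edge deletion can be
performed in the opposite order, with the same result. -/
theorem updP_delE_comm
    [DecidableEq ι] [DecidableEq K]
    (G : PreGraph ι L K D) (hG : IsPGraph G) (x : ι) (k : K) (d : D) (e : ι)
    (h1 : Applicable (EditOp.updP x k d) G)
    (h2 : Applicable (EditOp.delE e) (applyOp (EditOp.updP x k d) G)) :
    Applicable (EditOp.delE e) G ∧
    Applicable (EditOp.updP x k d) (applyOp (EditOp.delE e) G) ∧
    applyOp (EditOp.updP x k d) (applyOp (EditOp.delE e) G) =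
      applyOp (EditOp.delE e) (applyOp (EditOp.updP x k d) G) := by
  have hne : e ≠ x := by
    intro h; subst h
    have := h2.2 k
    simp [applyOp] at this
  have hprops : ∀ k', G.prop e k' = none := by
    intro k'
    have := h2.2 k'
    simp only [applyOp] at this
    rcases Decidable.em (e = x ∧ k' = k) with h | h
    · exact absurd h.1 hne
    · simpa [if_neg h] using this
  have he : e ∈ G.E := by
    have := h2.1
    simpa [applyOp] using this
  refine ⟨⟨he, hprops⟩, ?_, rfl⟩
  simpa [Applicable, applyOp] using h1
end
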